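/- A noncommutative crossing partition π of [n] avoids the pattern 312 if and only if the labeled binary tree φ⁻¹(π) is canonical. -/

import Mathlib

/-- Binary trees: each node has a (possibly empty) left subtree, a label, and a
(possibly empty) right subtree. -/
inductive BTree where
  | leaf : BTree
  | node : BTree → ℕ → BTree → BTree

/-- The in-order reading word of the labels of a binary tree. -/
def BTree.labels : BTree → List ℕ
  | .leaf => []
  | .node l x r => l.labels ++ x :: r.labels

/-- Labels increase from the root towards the leaves. -/
def BTree.Incr : BTree → Prop
  | .leaf => True
  | .node l x r => (∀ y ∈ l.labels, x < y) ∧ (∀ y ∈ r.labels, x < y) ∧ l.Incr ∧ r.Incr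

/-- A labeled binary tree with `n` nodes: labels are exactly `{1,...,n}`, each used once,
increasing from the root to the leaves. -/
def IsLabeledBTree (n : ℕ) (t : BTree) : Prop :=
  t.labels.Perm (List.range' 1 n) ∧ t.Incr

/-- The node labeled `b` is weakly right of the node labeled `a`: `b` is a descendant of `a`,
or the paths to the root branch with `a` on the left and `b` on the right. -/
def BTree.WeaklyRight : BTree → ℕ → ℕ → Prop
  | .leaf, _, _ => False
  | .node l x r, a, b =>
      (x = a ∧ (b ∈ l.labels ∨ b ∈ r.labels)) ∨
      (a ∈ l.labels ∧ b ∈ r.labels) ∨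
      l.WeaklyRight a b ∨ r.WeaklyRight a b

/-- A labeled binary tree is canonical if, for every `i`, the node labeled `i + 1`
is weakly right of the node labeled `i`. -/
def BTree.Canonical (t : BTree) : Prop :=
  ∀ i : ℕ, i ∈ t.labels → i + 1 ∈ t.labels → t.WeaklyRight i (i + 1)

/-- A word avoids the pattern 312: no positions `i < j < k` with `w_j < w_k < w_i`. -/
def Avoids312 (w : List ℕ) : Prop :=
  ¬ ∃ i j k : ℕ, i < j ∧ j < k ∧ k < w.length ∧
      w.getD j 0 < w.getD k 0 ∧ w.getD k 0 < w.getD i 0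

/-!
The tree fails to be canonical at `i` exactly when `i + 1` and `i` lie in the left and right
subtrees of a common node `c`; as `c < i`, the in-order word then contains the 312 pattern
`i + 1, c, i`. Conversely, if `i + 1` is weakly right of `i` but is read before `i`, it lies in
the left subtree of `i`, so every letter read in between exceeds `i`. Since the labels form an
interval, any 312 pattern `a, c, b` can be moved to one with `a = b + 1`: the letter `b + 1` is
read either before `c` (giving `b + 1, c, b`) or after it (giving `a, c, b + 1`).
-/

namespace List

variable {α : Type*}

theorem Nodup.cons_sublist_of_mem_right {l₁ l₂ s : List α} {b : α} (hd : (l₁ ++ l₂).Nodup)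
    (hs : b :: s <+ l₁ ++ l₂) (hb : b ∈ l₂) : b :: s <+ l₂ := by
  obtain ⟨_ | ⟨y, k₁⟩, k₂, hsplit, hk₁, hk₂⟩ := sublist_append_iff.1 hs
  · simpa [hsplit] using hk₂
  · obtain ⟨rfl, -⟩ := cons_eq_cons.1 hsplit
    exact absurd rfl ((nodup_append.1 hd).2.2 _ (hk₁.subset mem_cons_self) _ hb)

theorem Nodup.concat_sublist_of_mem_left {l₁ l₂ s : List α} {a : α} (hd : (l₁ ++ l₂).Nodup)
    (hs : s ++ [a] <+ l₁ ++ l₂) (ha : a ∈ l₁) : s ++ [a] <+ l₁ := by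
  rw [← reverse_sublist] at hs ⊢
  simp only [reverse_append, reverse_singleton, singleton_append] at hs ⊢
  refine Nodup.cons_sublist_of_mem_right ?_ hs (mem_reverse.2 ha)
  rw [← reverse_append, nodup_reverse]; exact hd

theorem sublist_triple_iff {a b c : α} {w : List α} :
    [a, b, c] <+ w ↔ ∃ w₁ w₂, w = w₁ ++ b :: w₂ ∧ a ∈ w₁ ∧ c ∈ w₂ := by
  constructor
  · intro h
    obtain ⟨r₁, r₂, rfl, ha, hbc⟩ := cons_sublist_iff.1 h
    obtain ⟨s₁, s₂, rfl, hb, hc⟩ := cons_sublist_iff.1 hbc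
    obtain ⟨u, v, rfl⟩ := append_of_mem hb
    exact ⟨r₁ ++ u, v ++ s₂, by simp, mem_append_left _ ha,
      mem_append_right _ (singleton_sublist.1 hc)⟩
  · rintro ⟨w₁, w₂, rfl, ha, hc⟩
    exact (singleton_sublist.2 ha).append ((singleton_sublist.2 hc).cons_cons b)

theorem sublist_triple_iff_getElem {a b c : α} {w : List α} :
    [a, b, c] <+ w ↔ ∃ i j k, ∃ (_ : i < j) (_ : j < k) (hk : k < w.length),
      w[i] = a ∧ w[j] = b ∧ w[k] = c := by
  constructor
  · intro h
    obtain ⟨_ | ⟨i, _ | ⟨j, _ | ⟨k, _ | _⟩⟩⟩, his, hpw⟩ := sublist_eq_map_getElem h <;>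
      simp at his
    simp only [pairwise_cons, mem_cons, forall_eq_or_imp] at hpw
    exact ⟨i, j, k, hpw.1.1, hpw.2.1.1, k.2, his.1.symm, his.2.1.symm, his.2.2.symm⟩
  · rintro ⟨i, j, k, hij, hjk, hk, rfl, rfl, rfl⟩
    have := map_getElem_sublist (l := w) (is := [⟨i, by omega⟩, ⟨j, by omega⟩, ⟨k, hk⟩])
      (by simp; omega)
    simpa using this

end List

open List in
theorem avoids312_iff_not_exists_sublist {w : List ℕ} :
    Avoids312 w ↔ ¬ ∃ a c b, [a, c, b] <+ w ∧ c < b ∧ b < a := by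
  refine not_congr ⟨?_, ?_⟩
  · rintro ⟨i, j, k, hij, hjk, hk, hjk', hki⟩
    simp only [getD_eq_getElem _ _ hk, getD_eq_getElem _ _ (hjk.trans hk),
      getD_eq_getElem _ _ ((hij.trans hjk).trans hk)] at hjk' hki
    exact ⟨_, _, _, sublist_triple_iff_getElem.2 ⟨i, j, k, hij, hjk, hk, rfl, rfl, rfl⟩, hjk', hki⟩
  · rintro ⟨a, c, b, hs, hcb, hba⟩
    obtain ⟨i, j, k, hij, hjk, hk, rfl, rfl, rfl⟩ := sublist_triple_iff_getElem.1 hs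
    refine ⟨i, j, k, hij, hjk, hk, ?_⟩
    simpa only [getD_eq_getElem _ _ hk, getD_eq_getElem _ _ (hjk.trans hk),
      getD_eq_getElem _ _ ((hij.trans hjk).trans hk)] using ⟨hcb, hba⟩

open List in
theorem exists_consecutive_312_of_312 {w : List ℕ} (hw : ∀ u ∈ w, ∀ v ∈ w, u < v → u + 1 ∈ w)
    {a b c : ℕ} (h : [a, c, b] <+ w) (hcb : c < b) (hba : b < a) :
    ∃ m d, [m + 1, d, m] <+ w ∧ d < m := by
  obtain ⟨k, rfl⟩ : ∃ k, a = b + 1 + k := ⟨a - b - 1, by omega⟩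
  clear hba
  induction k generalizing b with
  | zero => exact ⟨b, c, h, hcb⟩
  | succ k ih =>
    obtain ⟨w₁, w₂, rfl, ha, hb⟩ := sublist_triple_iff.1 h
    have hb₁ : b + 1 ∈ w₁ ++ c :: w₂ :=
      hw b (by simp [hb]) (b + 1 + (k + 1)) (by simp [ha]) (by omega)
    simp only [mem_append, mem_cons] at hb₁
    rcases hb₁ with hb₁ | hb₁ | hb₁
    · exact ⟨b, c, sublist_triple_iff.2 ⟨w₁, w₂, rfl, hb₁, hb⟩, hcb⟩
    · omega
    · refine ih (b := b + 1) (by omega) (sublist_triple_iff.2 ⟨w₁, w₂, rfl, ?_, hb₁⟩)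
      rwa [show b + 1 + 1 + k = b + 1 + (k + 1) by omega]

namespace BTree

open List

theorem WeaklyRight.mem : ∀ {t : BTree} {a b : ℕ}, t.WeaklyRight a b →
    a ∈ t.labels ∧ b ∈ t.labels
  | .node l x r, a, b, h => by
    rcases h with ⟨rfl, hb | hb⟩ | ⟨ha, hb⟩ | h | h
    · simp [labels, hb]
    · simp [labels, hb]
    · simp [labels, ha, hb]
    · simp [labels, h.mem.1, h.mem.2]
    · simp [labels, h.mem.1, h.mem.2]

theorem weaklyRight_or_weaklyRight : ∀ {t : BTree} {a b : ℕ}, a ∈ t.labels → b ∈ t.labels →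
    a ≠ b → t.WeaklyRight a b ∨ t.WeaklyRight b a
  | .node l x r, a, b, ha, hb, hab => by
    simp only [labels, mem_append, mem_cons] at ha hb
    simp only [WeaklyRight]
    rcases ha with ha | rfl | ha <;> rcases hb with hb | rfl | hb
    · rcases weaklyRight_or_weaklyRight ha hb hab with h | h <;> simp [h]
    · simp [ha]
    · simp [ha, hb]
    · simp [hb]
    · exact absurd rfl hab
    · simp [hb]
    · simp [ha, hb]
    · simp [ha]
    · rcases weaklyRight_or_weaklyRight ha hb hab with h | h <;> simp [h]

theorem Incr.exists_sublist_of_weaklyRight : ∀ {t : BTree}, t.Incr → ∀ {a b : ℕ},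
    t.WeaklyRight a b → b < a → ∃ c, [a, c, b] <+ t.labels ∧ c < b
  | .node l x r, ⟨hxl, hxr, hl, hr⟩, a, b, hab, hba => by
    rcases hab with ⟨rfl, hb | hb⟩ | ⟨ha, hb⟩ | h | h
    · exact absurd (hxl b hb) (by omega)
    · exact absurd (hxr b hb) (by omega)
    · exact ⟨x, (singleton_sublist.2 ha).append ((singleton_sublist.2 hb).cons_cons x), hxr b hb⟩
    · obtain ⟨c, hs, hcb⟩ := hl.exists_sublist_of_weaklyRight h hba
      exact ⟨c, sublist_append_of_sublist_left hs, hcb⟩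
    · obtain ⟨c, hs, hcb⟩ := hr.exists_sublist_of_weaklyRight h hba
      exact ⟨c, sublist_append_of_sublist_right (hs.cons x), hcb⟩

theorem Incr.lt_of_weaklyRight_of_sublist : ∀ {t : BTree}, t.Incr → t.labels.Nodup →
    ∀ {a b c : ℕ}, t.WeaklyRight a b → [b, c, a] <+ t.labels → a < c
  | .node l x r, ⟨hxl, hxr, hl, hr⟩, hd, a, b, c, hab, hs => by
    have hconcat : [b, c] ++ [a] <+ l.labels ++ x :: r.labels := hs
    have hsplit : l.labels ++ x :: r.labels = (l.labels ++ [x]) ++ r.labels := by simp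
    have hdx : ((l.labels ++ [x]) ++ r.labels).Nodup := hsplit ▸ hd
    have hsx : [b, c, a] <+ (l.labels ++ [x]) ++ r.labels := hsplit ▸ hs
    rcases hab with ⟨rfl, hb | hb⟩ | ⟨ha, hb⟩ | h | h
    · have := hdx.concat_sublist_of_mem_left (hsplit ▸ hconcat) (by simp)
      exact hxl c (((append_sublist_append_right _).1 this).subset (by simp))
    · exact absurd (hxr x ((hdx.cons_sublist_of_mem_right hsx hb).subset (by simp)))
        (lt_irrefl x)
    · exact absurd rfl ((nodup_append.1 hdx).2.2 a (mem_append_left _ ha) a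
        ((hdx.cons_sublist_of_mem_right hsx hb).subset (by simp : a ∈ [b, c, a])))
    · exact hl.lt_of_weaklyRight_of_sublist (nodup_append.1 hd).1 h
        (hd.concat_sublist_of_mem_left hconcat h.mem.1)
    · exact hr.lt_of_weaklyRight_of_sublist (nodup_append.1 hdx).2.1 h
        (hdx.cons_sublist_of_mem_right hsx h.mem.2)

end BTree

theorem IsLabeledBTree.nodup {n : ℕ} {t : BTree} (h : IsLabeledBTree n t) : t.labels.Nodup :=
  h.1.nodup_iff.2 List.nodup_range'

theorem IsLabeledBTree.add_one_mem {n : ℕ} {t : BTree} (h : IsLabeledBTree n t) :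
    ∀ u ∈ t.labels, ∀ v ∈ t.labels, u < v → u + 1 ∈ t.labels := by
  intro u hu v hv huv
  rw [h.1.mem_iff, List.mem_range'_1] at hu hv ⊢
  omega

/-- A noncommutative crossing partition `π` of `[n]` avoids 312 iff the corresponding
labeled binary tree `φ⁻¹(π)` is canonical.  Under the bijection `φ` (in-order reading
word), this says: for every labeled binary tree `t` with `n` nodes, the in-order word of
`t` avoids 312 iff `t` is canonical. -/
theorem avoids312_iff_canonical (n : ℕ) (t : BTree) (h : IsLabeledBTree n t) :
    Avoids312 t.labels ↔ t.Canonical := by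
  rw [avoids312_iff_not_exists_sublist]
  constructor
  · intro hA i hi hi₁
    refine (BTree.weaklyRight_or_weaklyRight hi hi₁ (by omega)).resolve_right fun hwr => hA ?_
    obtain ⟨c, hs, hc⟩ := h.2.exists_sublist_of_weaklyRight hwr (by omega)
    exact ⟨i + 1, c, i, hs, hc, by omega⟩
  · rintro hC ⟨a, c, b, hs, hcb, hba⟩
    obtain ⟨m, d, hs, hdm⟩ := exists_consecutive_312_of_312 h.add_one_mem hs hcb hba
    have hm : m ∈ t.labels := hs.subset (by simp)
    have hm₁ : m + 1 ∈ t.labels := hs.subset (by simp)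
    exact absurd (h.2.lt_of_weaklyRight_of_sublist h.nodup (hC m hm hm₁) hs) (by omega)
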